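/- Let R be a win-based WAM that satisfies apportionment lower quota (ALQ). Then R is equivalent to Perpetual PAV: its weight sequence satisfies g^{(j)}(1) = 1/(j+1) for all j ≥ 0, so R selects the same choice sequence as Perpetual PAV on every decision sequence (under the same tie-breaking). -/

import Mathlib

open scoped Classical
open Finset

/-! ## The perpetual voting framework

Voters are `Fin n`; alternatives are natural numbers (the order on `ℕ` plays no
special role: tie-breaking orders are explicit parameters `tb`). -/

/-- An approval profile: each voter approves a finite set of alternatives. -/
abbrev Profile (n : ℕ) := Fin n → Finset ℕ

/-- A decision sequence for `n` voters: in round `i` (0-indexed) the set of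
alternatives is `C i` and the approval profile is `A i`; every approval set is a
nonempty subset of the current alternatives. -/
structure DecisionSeq (n : ℕ) where
  C : ℕ → Finset ℕ
  A : ℕ → Profile n
  approvalSub : ∀ i v, A i v ⊆ C i
  approvalNonempty : ∀ i v, (A i v).Nonempty

/-- A perpetual voting rule: for every number of voters and every decision
sequence it resolutely chooses one winning alternative in each round; the winner
belongs to the current set of alternatives, and it only depends on the rounds up
to (and including) the current one (the past winners are then determined as
well, since the rule is applied round by round). -/
structure PerpetualRule where
  choice : ∀ n : ℕ, DecisionSeq n → ℕ → ℕ
  choice_mem : ∀ (n : ℕ) (D : DecisionSeq n) (k : ℕ), choice n D k ∈ D.C k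
  causal : ∀ (n : ℕ) (D D' : DecisionSeq n) (k : ℕ),
    (∀ i ≤ k, D.A i = D'.A i ∧ D.C i = D'.C i) → choice n D k = choice n D' k

/-- Satisfaction of voter `v` with the first `t` rounds of the choice sequence
produced by rule `R` on `D`. -/
noncomputable def satAt (R : PerpetualRule) {n : ℕ} (D : DecisionSeq n) (v : Fin n) (t : ℕ) : ℕ :=
  ((Finset.range t).filter fun i => R.choice n D i ∈ D.A i v).card

/-- Voter `v` has a dry spell of length `l`: in some window of `l` consecutive
rounds her satisfaction does not increase. -/
def HasDrySpell (R : PerpetualRule) {n : ℕ} (D : DecisionSeq n) (v : Fin n) (l : ℕ) : Prop :=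
  ∃ t : ℕ, satAt R D v t = satAt R D v (t + l)

/-- `R` has a dry spell guarantee of `d`: on no decision sequence does any voter
have a dry spell of length `d n`. -/
def DrySpellGuarantee (R : PerpetualRule) (d : ℕ → ℕ) : Prop :=
  ∀ (n : ℕ) (D : DecisionSeq n) (v : Fin n), ¬ HasDrySpell R D v (d n)

/-- Weighted approval score of alternative `c` for weights `β`. -/
noncomputable def approvalScore {n : ℕ} (β : Fin n → ℝ) (A : Profile n) (c : ℕ) : ℝ :=
  ∑ v : Fin n, if c ∈ A v then β v else 0

/-- `c` is the alternative selected from `Cs` by maximizing the weighted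
approval score w.r.t. weights `β`, ties broken by the fixed order `tb`. -/
def SelectedBy {n : ℕ} (β : Fin n → ℝ) (A : Profile n) (Cs : Finset ℕ)
    (tb : ℕ → ℕ → Prop) (c : ℕ) : Prop :=
  c ∈ Cs ∧ (∀ c' ∈ Cs, approvalScore β A c' ≤ approvalScore β A c) ∧
    (∀ c' ∈ Cs, approvalScore β A c' = approvalScore β A c → tb c c')

/-- `R` is a weighted approval method (WAM) with tie-breaking order `tb`:
there are voter weights, initialized to `1`, depending only on the history of
previous rounds, such that in each round `R` selects a weighted-approval-score
maximizing alternative (ties broken by `tb`). -/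
def IsWAM (R : PerpetualRule) (tb : ℕ → ℕ → Prop) : Prop :=
  ∃ α : ∀ n : ℕ, DecisionSeq n → ℕ → Fin n → ℝ,
    (∀ (n : ℕ) (D : DecisionSeq n) (v : Fin n), α n D 0 v = 1) ∧
    (∀ (n : ℕ) (D D' : DecisionSeq n) (k : ℕ),
        (∀ i < k, D.A i = D'.A i ∧ D.C i = D'.C i) → α n D k = α n D' k) ∧
    ∀ (n : ℕ) (D : DecisionSeq n) (k : ℕ),
      SelectedBy (α n D k) (D.A k) (D.C k) tb (R.choice n D k)

/-- The weights of a basic WAM with update functions `f` (for losing) and `g`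
(for winning), relative to the choices of rule `R`. -/
noncomputable def basicWeight (R : PerpetualRule) (f g : ℝ → ℝ) (n : ℕ) (D : DecisionSeq n) :
    ℕ → Fin n → ℝ
  | 0 => fun _ => 1
  | k + 1 => fun v =>
      if R.choice n D k ∈ D.A k v then g (basicWeight R f g n D k v)
      else f (basicWeight R f g n D k v)

/-- `R` is the basic WAM with update functions `f`, `g` and tie-breaking `tb`. -/
def IsBasicWAMWith (R : PerpetualRule) (f g : ℝ → ℝ) (tb : ℕ → ℕ → Prop) : Prop :=
  ∀ (n : ℕ) (D : DecisionSeq n) (k : ℕ),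
    SelectedBy (basicWeight R f g n D k) (D.A k) (D.C k) tb (R.choice n D k)

/-- A win-based WAM: a basic WAM with `f = id` (and `g x ≤ x`). -/
def IsWinBasedWAM (R : PerpetualRule) (g : ℝ → ℝ) (tb : ℕ → ℕ → Prop) : Prop :=
  (∀ x : ℝ, g x ≤ x) ∧ IsBasicWAMWith R id g tb

/-- A loss-based WAM: a basic WAM with `g = id` (and `f x ≥ x`). -/
def IsLossBasedWAM (R : PerpetualRule) (f : ℝ → ℝ) (tb : ℕ → ℕ → Prop) : Prop :=
  (∀ x : ℝ, x ≤ f x) ∧ IsBasicWAMWith R f id tb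

/-- Approval voting: the basic WAM with `f = g = id`. -/
def IsAV (R : PerpetualRule) (tb : ℕ → ℕ → Prop) : Prop :=
  IsBasicWAMWith R id id tb

/-- Perpetual Reset: the basic WAM with `f x = x + 1` and `g x = 1`. -/
def IsPerpetualReset (R : PerpetualRule) (tb : ℕ → ℕ → Prop) : Prop :=
  IsBasicWAMWith R (fun x => x + 1) (fun _ => 1) tb

/-- Perpetual PAV: the win-based WAM with `g x = x / (x + 1)`, i.e. the weight of
a voter satisfied `s` times is `1 / (s + 1)`. -/
def IsPerpetualPAV (R : PerpetualRule) (tb : ℕ → ℕ → Prop) : Prop :=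
  IsBasicWAMWith R id (fun x => x / (x + 1)) tb

/-- The voter weights of Perpetual Consensus (relative to the choices of `R`). -/
noncomputable def consensusWeight (R : PerpetualRule) (n : ℕ) (D : DecisionSeq n) :
    ℕ → Fin n → ℝ
  | 0 => fun _ => 1
  | k + 1 => fun v =>
      if R.choice n D k ∈ D.A k v ∧ 0 < consensusWeight R n D k v then
        consensusWeight R n D k v + 1 -
          (n : ℝ) / ((Finset.univ.filter fun u : Fin n =>
              R.choice n D k ∈ D.A k u ∧ 0 < consensusWeight R n D k u).card : ℝ)
      else consensusWeight R n D k v + 1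

/-- `R` is Perpetual Consensus with tie-breaking order `tb`: in each round it
selects an alternative maximizing `∑_{v approving c} max 0 (α v)` for the
Perpetual Consensus weights `α`. -/
def IsPerpetualConsensus (R : PerpetualRule) (tb : ℕ → ℕ → Prop) : Prop :=
  ∀ (n : ℕ) (D : DecisionSeq n) (k : ℕ),
    SelectedBy (fun v => max 0 (consensusWeight R n D k v)) (D.A k) (D.C k) tb
      (R.choice n D k)

/-- Insert the decision instance `(A0, C0)` at position `i` (0-indexed) into `D`,
shifting all later rounds by one. -/
def DecisionSeq.insertAt {n : ℕ} (D : DecisionSeq n) (i : ℕ) (C0 : Finset ℕ)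
    (A0 : Profile n) (hsub : ∀ v, A0 v ⊆ C0) (hne : ∀ v, (A0 v).Nonempty) :
    DecisionSeq n where
  C := fun j => if j < i then D.C j else if j = i then C0 else D.C (j - 1)
  A := fun j v => if j < i then D.A j v else if j = i then A0 v else D.A (j - 1) v
  approvalSub := by
    intro j v
    try dsimp only
    split_ifs with h1 h2
    · exact D.approvalSub j v
    · exact hsub v
    · exact D.approvalSub (j - 1) v
  approvalNonempty := by
    intro j v
    try dsimp only
    split_ifs with h1 h2
    · exact D.approvalNonempty j v
    · exact hne v
    · exact D.approvalNonempty (j - 1) v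

/-- The profile `A0` is uncontroversial due to `c`: the intersection of all
approval sets is exactly `{c}`. -/
def Uncontroversial {n : ℕ} (A0 : Profile n) (c : ℕ) : Prop :=
  (∀ v, c ∈ A0 v) ∧ ∀ c', (∀ v, c' ∈ A0 v) → c' = c

/-- Independence of uncontroversial decisions: inserting an uncontroversial
decision instance at any position yields `c` in the inserted round and leaves
all other choices unchanged. -/
def SatisfiesIUD (R : PerpetualRule) : Prop :=
  ∀ (n : ℕ) (D : DecisionSeq n) (i : ℕ) (C0 : Finset ℕ) (A0 : Profile n)
    (hsub : ∀ v, A0 v ⊆ C0) (hne : ∀ v, (A0 v).Nonempty) (c : ℕ),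
    Uncontroversial A0 c →
      (∀ j < i, R.choice n (D.insertAt i C0 A0 hsub hne) j = R.choice n D j) ∧
      R.choice n (D.insertAt i C0 A0 hsub hne) i = c ∧
      ∀ j, i ≤ j → R.choice n (D.insertAt i C0 A0 hsub hne) (j + 1) = R.choice n D j

/-- A simple decision sequence: the same profile and alternatives in every
round, and every voter approves exactly one alternative. -/
def DecisionSeq.IsSimple {n : ℕ} (D : DecisionSeq n) : Prop :=
  (∀ i, D.A i = D.A 0) ∧ (∀ i, D.C i = D.C 0) ∧ ∀ v, (D.A 0 v).card = 1

/-- `#v`: the number of voters with the same approval set as `v` (in a simple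
decision sequence). -/
noncomputable def groupSize {n : ℕ} (D : DecisionSeq n) (v : Fin n) : ℕ :=
  (Finset.univ.filter fun u : Fin n => D.A 0 u = D.A 0 v).card

/-- Simple proportionality: on every simple decision sequence with `n` voters,
after `n` rounds every voter's satisfaction equals `#v`. -/
def SatisfiesSimpleProportionality (R : PerpetualRule) : Prop :=
  ∀ (n : ℕ) (D : DecisionSeq n), D.IsSimple →
    ∀ v : Fin n, satAt R D v n = groupSize D v

/-- Apportionment lower quota: on simple decision sequences, after `k` rounds
every voter has satisfaction at least `⌊k · #v / n⌋`. -/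
def SatisfiesALQ (R : PerpetualRule) : Prop :=
  ∀ (n : ℕ) (D : DecisionSeq n), D.IsSimple → ∀ (k : ℕ) (v : Fin n),
    ⌊((k : ℚ) * (groupSize D v : ℚ)) / (n : ℚ)⌋ ≤ (satAt R D v k : ℤ)

/-- Apportionment upper quota: on simple decision sequences, after `k` rounds
every voter has satisfaction at most `⌈k · #v / n⌉`. -/
def SatisfiesAUQ (R : PerpetualRule) : Prop :=
  ∀ (n : ℕ) (D : DecisionSeq n), D.IsSimple → ∀ (k : ℕ) (v : Fin n),
    (satAt R D v k : ℤ) ≤ ⌈((k : ℚ) * (groupSize D v : ℚ)) / (n : ℚ)⌉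

/-- The load each member of `N'` would carry if `N'` were selected. -/
noncomputable def newLoad {n : ℕ} (ld : Fin n → ℝ) (N' : Finset (Fin n)) : ℝ :=
  (1 + ∑ v ∈ N', ld v) / (N'.card : ℝ)

/-- `R` is Perpetual Phragmén with tie-breaking order `tb` on alternatives:
there are loads (initially `0`) and, in each round, a selected nonempty voter
set of minimal prospective load among all sets jointly approving some
alternative; the winner is jointly approved by the selected set (ties among its
jointly approved alternatives broken by `tb`) and loads are updated accordingly. -/
def IsPerpetualPhragmen (R : PerpetualRule) (tb : ℕ → ℕ → Prop) : Prop :=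
  ∃ (load : ∀ n : ℕ, DecisionSeq n → ℕ → Fin n → ℝ)
    (S : ∀ n : ℕ, DecisionSeq n → ℕ → Finset (Fin n)),
    (∀ (n : ℕ) (D : DecisionSeq n) (v : Fin n), load n D 0 v = 0) ∧
    ∀ (n : ℕ) (D : DecisionSeq n) (k : ℕ),
      (S n D k).Nonempty ∧
      (∀ v ∈ S n D k, R.choice n D k ∈ D.A k v) ∧
      (∀ N' : Finset (Fin n), N'.Nonempty → (∃ c, ∀ v ∈ N', c ∈ D.A k v) →
        newLoad (load n D k) (S n D k) ≤ newLoad (load n D k) N') ∧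
      (∀ c, (∀ v ∈ S n D k, c ∈ D.A k v) → tb (R.choice n D k) c) ∧
      ∀ v : Fin n, load n D (k + 1) v =
        if v ∈ S n D k then newLoad (load n D k) (S n D k) else load n D k v

/-- Rotating Dictator w.r.t. the enumeration `e` of the voters: in round `k`
an alternative approved by the dictator `e n (k mod n)` is chosen (the
tb-best alternative approved by the dictator). -/
def IsRotatingDictator (R : PerpetualRule) (e : ∀ n : ℕ, Equiv.Perm (Fin n))
    (tb : ℕ → ℕ → Prop) : Prop :=
  ∀ (n : ℕ) (hn : 0 < n) (D : DecisionSeq n) (k : ℕ),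
    R.choice n D k ∈ D.A k (e n ⟨k % n, Nat.mod_lt k hn⟩) ∧
    ∀ c ∈ D.A k (e n ⟨k % n, Nat.mod_lt k hn⟩), tb (R.choice n D k) c

/-- `r(x)` for the Exponential Rule: `(m+1)/2` for the smallest natural number
`m` such that `2 ^ l * x = m` for some `l ≥ 0` (and `0` if no such `m` exists;
those values are never required). -/
noncomputable def expRound (x : ℝ) : ℕ :=
  if h : ∃ m : ℕ, ∃ l : ℕ, (2 : ℝ) ^ l * x = (m : ℝ) then (Nat.find h + 1) / 2 else 0

/-- The `f`-function of the Exponential Rule. -/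
noncomputable def expF (x : ℝ) : ℝ :=
  ((2 * (expRound x : ℝ) + 1) / (2 * (expRound x : ℝ) - 1)) * x

/-- The `g`-function of the Exponential Rule. -/
noncomputable def expG (x : ℝ) : ℝ :=
  ((2 * (expRound x : ℝ) + 1) /
      ((2 : ℝ) ^ (Nat.factorial (expRound x)) * (2 * (expRound x : ℝ) - 1))) * x

/-- The Exponential Rule: the basic WAM with update functions `expF`, `expG`. -/
def IsExponentialRule (R : PerpetualRule) (tb : ℕ → ℕ → Prop) : Prop :=
  IsBasicWAMWith R expF expG tb

/-- Round `j` is dictatorial: some voter `v` approves the winner, while all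
other voters disapprove the winner and jointly approve some other alternative `c`. -/
def DictatorialRound (R : PerpetualRule) {n : ℕ} (D : DecisionSeq n) (j : ℕ) : Prop :=
  ∃ c ∈ D.C j, c ≠ R.choice n D j ∧ ∃ v : Fin n, R.choice n D j ∈ D.A j v ∧
    ∀ v' : Fin n, v' ≠ v → R.choice n D j ∉ D.A j v' ∧ c ∈ D.A j v'

/-- The weights of Frege's apportionment method on the apportionment instance
induced by a simple decision sequence `D` (party of alternative `c` has vote
share `|N(c)|/n`), with seats assigned according to the choices of rule `R`. -/
noncomputable def fregeWeight (R : PerpetualRule) (n : ℕ) (D : DecisionSeq n) :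
    ℕ → ℕ → ℝ
  | 0 => fun c => ((Finset.univ.filter fun v : Fin n => D.A 0 v = {c}).card : ℝ) / (n : ℝ)
  | t + 1 => fun c =>
      fregeWeight R n D t c +
        ((Finset.univ.filter fun v : Fin n => D.A 0 v = {c}).card : ℝ) / (n : ℝ) -
        if R.choice n D t = c then 1 else 0

/-! A voter satisfied `j` times carries weight `g^[j] 1`, and we show `g^[j] 1 = 1 / (j + 1)` by
strong induction on `j`. If the first deviating iterate were too small or too large, a simple
profile with two party sizes in a well-chosen rational ratio would let one party be outscored by
all the others for so long that it falls below its lower quota. Once the iterates agree with those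
of `x ↦ x / (x + 1)`, the rule has the weights of Perpetual PAV. -/

section WinBasedWeights

variable (R : PerpetualRule) {n : ℕ}

lemma satAt_succ (D : DecisionSeq n) (v : Fin n) (k : ℕ) :
    satAt R D v (k + 1) = satAt R D v k + if R.choice n D k ∈ D.A k v then 1 else 0 := by
  rw [satAt, satAt, range_add_one, filter_insert]
  split_ifs
  · exact card_insert_of_notMem (by simp)
  · rfl

lemma basicWeight_id_eq_iterate (g : ℝ → ℝ) (D : DecisionSeq n) (k : ℕ) (v : Fin n) :
    basicWeight R id g n D k v = g^[satAt R D v k] 1 := by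
  induction k with
  | zero => simp [basicWeight, satAt]
  | succ k ih =>
    simp only [basicWeight, satAt_succ]
    split_ifs
    · rw [ih, Function.iterate_succ_apply']
    · rw [ih, add_zero, id]

end WinBasedWeights

lemma IsBasicWAMWith.of_iterate_eq {R : PerpetualRule} {g g' : ℝ → ℝ} {tb : ℕ → ℕ → Prop}
    (hR : IsBasicWAMWith R id g tb) (h : ∀ j, g^[j] 1 = g'^[j] 1) :
    IsBasicWAMWith R id g' tb := by
  intro n D k
  have hw : basicWeight R id g' n D k = basicWeight R id g n D k :=
    funext fun v => by rw [basicWeight_id_eq_iterate, basicWeight_id_eq_iterate, h]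
  exact hw ▸ hR n D k

lemma iterate_div_add_one_one (j : ℕ) :
    (fun x : ℝ => x / (x + 1))^[j] 1 = 1 / ((j : ℝ) + 1) := by
  induction j with
  | zero => simp
  | succ j ih =>
    rw [Function.iterate_succ_apply', ih]
    push_cast
    field_simp
    ring

lemma card_filter_range_le_of_blocked {p : ℕ → Prop} [DecidablePred p] {J k : ℕ}
    (h : ∀ t < k, #{i ∈ range t | p i} = J → ¬ p t) : #{i ∈ range k | p i} ≤ J := by
  induction k with
  | zero => simp
  | succ k ih =>
    have ih := ih fun t ht => h t (Nat.lt_succ_of_lt ht)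
    rw [range_add_one, filter_insert]
    split_ifs with hk
    · have : #{i ∈ range k | p i} ≠ J := fun hJ => h k k.lt_succ_self hJ hk
      rw [card_insert_of_notMem (by simp)]
      omega
    · exact ih

def partySeq {n : ℕ} (grp : Fin n → ℕ) : DecisionSeq n where
  C _ := univ.image grp
  A _ v := {grp v}
  approvalSub _ _ := by simp
  approvalNonempty _ _ := singleton_nonempty _

lemma partySeq_isSimple {n : ℕ} (grp : Fin n → ℕ) : (partySeq grp).IsSimple :=
  ⟨fun _ => rfl, fun _ => rfl, fun _ => card_singleton _⟩

lemma groupSize_partySeq {n : ℕ} (grp : Fin n → ℕ) (v : Fin n) :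
    groupSize (partySeq grp) v = #{u | grp u = grp v} := by
  simp [groupSize, partySeq]

section Seats

variable (R : PerpetualRule) {n : ℕ}

noncomputable def seats (D : DecisionSeq n) (c t : ℕ) : ℕ :=
  #{i ∈ range t | R.choice n D i = c}

lemma sum_seats_le (D : DecisionSeq n) (s : Finset ℕ) (t : ℕ) :
    ∑ c ∈ s, seats R D c t ≤ t := by
  unfold seats
  rw [sum_card_fiberwise_eq_card_filter]
  exact (card_filter_le _ _).trans (card_range t).le

variable (grp : Fin n → ℕ)

lemma satAt_partySeq (v : Fin n) (t : ℕ) :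
    satAt R (partySeq grp) v t = seats R (partySeq grp) (grp v) t := by
  unfold satAt seats
  congr 1
  exact filter_congr fun i _ => mem_singleton

lemma approvalScore_partySeq (g : ℝ → ℝ) (t c : ℕ) :
    approvalScore (basicWeight R id g n (partySeq grp) t) ((partySeq grp).A t) c =
      #{v | grp v = c} * g^[seats R (partySeq grp) c t] 1 := by
  rw [approvalScore, ← sum_filter, ← nsmul_eq_mul, ← sum_const]
  refine sum_congr (by simp [partySeq, eq_comm]) fun v hv => ?_
  rw [basicWeight_id_eq_iterate, satAt_partySeq]
  simp_all [partySeq]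

end Seats

section Outscored

variable {R : PerpetualRule} {n : ℕ} (grp : Fin n → ℕ) {r s₁ s₂ : ℕ}

/-- While party `r` holds `J` seats in round `t < k ≤ J + r * S`, the parties `c < r` hold fewer
than `r * S` seats, so one of them has fewer than `S` seats and outscores `r`. -/
lemma seats_partySeq_le_of_outscored {g : ℝ → ℝ} {tb : ℕ → ℕ → Prop}
    (hsel : IsBasicWAMWith R id g tb)
    (hfib : ∀ c < r, #{v | grp v = c} = s₁) (hs₁ : 0 < s₁) (hvictim : #{v | grp v = r} = s₂)
    {J S k : ℕ} (hscore : ∀ s < S, (s₂ : ℝ) * g^[J] 1 < s₁ * g^[s] 1) (hk : k ≤ J + r * S) :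
    seats R (partySeq grp) r k ≤ J := by
  refine card_filter_range_le_of_blocked fun t ht hJ hwin => ?_
  have hJ : seats R (partySeq grp) r t = J := hJ
  have hsum := sum_seats_le R (partySeq grp) (range (r + 1)) t
  rw [sum_range_succ, hJ] at hsum
  obtain ⟨c, hc, hcS⟩ : ∃ c ∈ range r, seats R (partySeq grp) c t < S := by
    refine exists_lt_of_sum_lt ?_
    rw [sum_const, card_range, smul_eq_mul]
    omega
  rw [mem_range] at hc
  have hcC : c ∈ (partySeq grp).C t := by
    obtain ⟨v, hv⟩ := card_pos.mp ((hfib c hc).symm ▸ hs₁ : 0 < #{v | grp v = c})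
    exact mem_image.mpr ⟨v, mem_univ _, (mem_filter.mp hv).2⟩
  have hle := (hsel n (partySeq grp) t).2.1 c hcC
  rw [hwin, approvalScore_partySeq, approvalScore_partySeq, hJ, hfib c hc, hvictim] at hle
  exact hle.not_gt (hscore _ hcS)

lemma floor_le_seats_partySeq (hALQ : SatisfiesALQ R) {c s : ℕ} (hc : #{v | grp v = c} = s)
    (hs : 0 < s) (k : ℕ) : k * s / n ≤ seats R (partySeq grp) c k := by
  obtain ⟨v, hv⟩ := card_pos.mp (hc.symm ▸ hs : 0 < #{v | grp v = c})
  have hv : grp v = c := (mem_filter.mp hv).2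
  have h := hALQ n (partySeq grp) (partySeq_isSimple grp) k v
  rw [groupSize_partySeq, hv, hc, satAt_partySeq, hv, ← Nat.cast_mul,
    Rat.floor_natCast_div_natCast] at h
  exact_mod_cast h

lemma SatisfiesALQ.mul_lt_of_outscored (hALQ : SatisfiesALQ R) {g : ℝ → ℝ} {tb : ℕ → ℕ → Prop}
    (hsel : IsBasicWAMWith R id g tb)
    (hfib : ∀ c < r, #{v | grp v = c} = s₁) (hs₁ : 0 < s₁) (hvictim : #{v | grp v = r} = s₂)
    (hs₂ : 0 < s₂) {J S k : ℕ} (hscore : ∀ s < S, (s₂ : ℝ) * g^[J] 1 < s₁ * g^[s] 1)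
    (hk : k ≤ J + r * S) : k * s₂ < (J + 1) * n := by
  have hn : 0 < n := by
    obtain ⟨v, -⟩ := card_pos.mp (hvictim.symm ▸ hs₂ : 0 < #{v | grp v = r})
    exact v.pos
  have hlow := floor_le_seats_partySeq grp hALQ hvictim hs₂ k
  have hup := seats_partySeq_le_of_outscored grp hsel hfib hs₁ hvictim hscore hk
  by_contra! h
  have := (Nat.le_div_iff_mul_le hn).mpr h
  omega

end Outscored

def partyOf {m : ℕ} (size : Fin m → ℕ) (v : Fin (∑ i, size i)) : ℕ :=
  (finSigmaFinEquiv.symm v).1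

lemma card_partyOf_eq {m : ℕ} (size : Fin m → ℕ) (i : Fin m) :
    #{v | partyOf size v = i} = size i := by
  rw [card_equiv (t := {x : (j : Fin m) × Fin (size j) | x.1 = i}) finSigmaFinEquiv.symm
      (by simp [partyOf, Fin.val_inj]),
    ← Fintype.card_subtype, Fintype.card_congr (Equiv.sigmaSubtype i), Fintype.card_fin]

lemma exists_parties (r s₁ s₂ : ℕ) :
    ∃ grp : Fin (r * s₁ + s₂) → ℕ, (∀ c < r, #{v | grp v = c} = s₁) ∧ #{v | grp v = r} = s₂ := by
  let size : Fin (r + 1) → ℕ := fun i => if (i : ℕ) < r then s₁ else s₂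
  have hn : ∑ i, size i = r * s₁ + s₂ := by simp [size, Fin.sum_univ_castSucc]
  rw [← hn]
  exact ⟨partyOf size, fun c hc => by simpa [size, hc] using card_partyOf_eq size ⟨c, by omega⟩,
    by simpa [size] using card_partyOf_eq size (Fin.last r)⟩

lemma exists_nat_div_btwn {x y : ℝ} (hx : 0 ≤ x) (hxy : x < y) :
    ∃ a b : ℕ, 0 < a ∧ 0 < b ∧ x < b / a ∧ (b : ℝ) / a < y := by
  obtain ⟨q, hxq, hqy⟩ := exists_rat_btwn hxy
  have hq : 0 < q := by exact_mod_cast hx.trans_lt hxq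
  have hnum : 0 < q.num := Rat.num_pos.mpr hq
  have hcast : ((q.num.toNat : ℕ) : ℝ) / q.den = q := by
    rw [Rat.cast_def]
    exact congrArg (· / _) (by exact_mod_cast Int.toNat_of_nonneg hnum.le)
  exact ⟨q.den, q.num.toNat, q.den_pos, by omega, hcast ▸ hxq, hcast ▸ hqy⟩

section IterateBounds

variable {R : PerpetualRule} {g : ℝ → ℝ} {tb : ℕ → ℕ → Prop}

/-- If `g^[m+1] 1` were below `1/(m+2)`, then in a profile of `a` parties of size `b`
and a victim party of size `a` (with `b/a` just below `(m+1)/(m+2)`), the victim would be stuck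
at `m + 1` seats during `(a+1)(m+1)` rounds, below its lower quota. -/
lemma one_div_le_iterate_succ (hALQ : SatisfiesALQ R) (hsel : IsBasicWAMWith R id g tb) {m : ℕ}
    (IH : ∀ i ≤ m, g^[i] 1 = 1 / ((i : ℝ) + 1)) : 1 / ((m : ℝ) + 2) ≤ g^[m + 1] 1 := by
  by_contra! hw
  set w := g^[m + 1] 1
  have hlt : max (w * (m + 1)) 0 < (m + 1) / (m + 2) := by
    refine max_lt ?_ (by positivity)
    rw [lt_div_iff₀ (by positivity)]
    rw [lt_div_iff₀ (by positivity)] at hw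
    nlinarith
  obtain ⟨a, b, ha, hb, hlo, hhi⟩ := exists_nat_div_btwn (le_max_right _ _) hlt
  obtain ⟨hwab, -⟩ := max_lt_iff.mp hlo
  have haR : (0 : ℝ) < a := by exact_mod_cast ha
  have hba : b * (m + 2) < a * (m + 1) := by
    rw [div_lt_div_iff₀ haR (by positivity)] at hhi
    exact_mod_cast (by linarith : (b : ℝ) * (m + 2) < a * (m + 1))
  obtain ⟨grp, hfib, hvictim⟩ := exists_parties a b a
  have hscore : ∀ s < m + 1, (a : ℝ) * g^[m + 1] 1 < b * g^[s] 1 := by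
    intro s hs
    have hsm : (s : ℝ) ≤ m := by exact_mod_cast Nat.lt_succ_iff.mp hs
    rw [IH s (by omega), mul_one_div, lt_div_iff₀ (by positivity)]
    rw [lt_div_iff₀ haR] at hwab
    rcases le_or_gt w 0 with hw0 | hw0 <;> nlinarith
  have hquota := hALQ.mul_lt_of_outscored grp hsel hfib hb hvictim ha hscore
    (k := (a + 1) * (m + 1)) (by ring_nf; omega)
  nlinarith

/-- If `g^[m+1] 1` were above `1/(m+2)`, then in a profile of `b` parties of size `a`
and a victim party of size `b` (with `b/a` just above `1/(m+2)`), the victim would win nothing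
during `b(m+2)` rounds, below its lower quota. -/
lemma iterate_succ_le_one_div (hALQ : SatisfiesALQ R) (hsel : IsBasicWAMWith R id g tb) {m : ℕ}
    (IH : ∀ i ≤ m, g^[i] 1 = 1 / ((i : ℝ) + 1)) : g^[m + 1] 1 ≤ 1 / ((m : ℝ) + 2) := by
  by_contra! hw
  set w := g^[m + 1] 1
  have hlt : 1 / ((m : ℝ) + 2) < min w (1 / ((m : ℝ) + 1)) :=
    lt_min hw (one_div_lt_one_div_of_lt (by positivity) (by linarith))
  obtain ⟨a, b, ha, hb, hlo, hhi⟩ := exists_nat_div_btwn (by positivity) hlt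
  obtain ⟨hbw, hbm⟩ := lt_min_iff.mp hhi
  have haR : (0 : ℝ) < a := by exact_mod_cast ha
  have hab : a < b * (m + 2) := by
    rw [div_lt_div_iff₀ (by positivity) haR] at hlo
    exact_mod_cast (by linarith : (a : ℝ) < b * (m + 2))
  have hbm : (b : ℝ) * (m + 1) < a := by
    rw [div_lt_div_iff₀ haR (by positivity)] at hbm
    linarith
  obtain ⟨grp, hfib, hvictim⟩ := exists_parties b a b
  have hscore : ∀ s < m + 2, (b : ℝ) * g^[0] 1 < a * g^[s] 1 := by
    intro s hs
    rw [Function.iterate_zero_apply, mul_one]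
    rcases Nat.lt_succ_iff_lt_or_eq.mp hs with hs | rfl
    · have hsm : (s : ℝ) ≤ m := by exact_mod_cast Nat.lt_succ_iff.mp hs
      rw [IH s (by omega), mul_one_div, lt_div_iff₀ (by positivity)]
      nlinarith
    · rwa [div_lt_iff₀ haR, mul_comm] at hbw
  have hquota := hALQ.mul_lt_of_outscored grp hsel hfib ha hvictim hb hscore
    (k := b * (m + 2)) (by omega)
  nlinarith

end IterateBounds

theorem winBased_WAM_with_ALQ_is_perpetualPAV_general
    (R : PerpetualRule) (g : ℝ → ℝ) (tb : ℕ → ℕ → Prop)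
    (hR : IsWinBasedWAM R g tb) (hALQ : SatisfiesALQ R) :
    (∀ j : ℕ, g^[j] (1 : ℝ) = 1 / ((j : ℝ) + 1)) ∧ IsPerpetualPAV R tb := by
  obtain ⟨-, hsel⟩ := hR
  have hiter : ∀ j : ℕ, g^[j] (1 : ℝ) = 1 / ((j : ℝ) + 1) := by
    intro j
    induction j using Nat.strong_induction_on with
    | _ j IH =>
      cases j with
      | zero => simp
      | succ m =>
        have IH' : ∀ i ≤ m, g^[i] (1 : ℝ) = 1 / ((i : ℝ) + 1) := fun i hi => IH i (by omega)
        rw [Nat.cast_succ, add_assoc, one_add_one_eq_two]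
        exact le_antisymm (iterate_succ_le_one_div hALQ hsel IH')
          (one_div_le_iterate_succ hALQ hsel IH')
  exact ⟨hiter, hsel.of_iterate_eq fun j => by rw [hiter, iterate_div_add_one_one]⟩

/-- A win-based WAM satisfying apportionment lower quota is
equivalent to Perpetual PAV: its weight sequence satisfies `g^[j] 1 = 1/(j+1)`
for all `j`, and hence (under the same tie-breaking) the rule selects the same
choice sequence as Perpetual PAV, i.e. it is a Perpetual PAV rule. -/
theorem winBased_WAM_with_ALQ_is_perpetualPAV
    (R : PerpetualRule) (g : ℝ → ℝ) (tb : ℕ → ℕ → Prop) (htb : IsLinearOrder ℕ tb)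
    (hR : IsWinBasedWAM R g tb) (hALQ : SatisfiesALQ R) :
    (∀ j : ℕ, g^[j] (1 : ℝ) = 1 / ((j : ℝ) + 1)) ∧ IsPerpetualPAV R tb :=
  winBased_WAM_with_ALQ_is_perpetualPAV_general R g tb hR hALQ
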